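/- arXiv:math/0610465 — 3 statements merged into one kernel-verified Lean document; each statement's English description precedes it below -/
import Mathlib

section
/- Let F(t) = \sum_{i\ge 0} a_i t^i be a formal power series and define P_F(n) = \sum_{i=0}^{n-1} a_i. Suppose there exist positive integers k and k' such that both n \mapsto P_F(kn) and n \mapsto P_F(k'n) agree with polynomial functions of n (for all n sufficiently large). Then the constant terms of these two polynomials are equal. -/
/-- If the partial-sum function `n ↦ P_F(k n)` of a formal power series `F`
agrees with a polynomial `p` for large `n`, and similarly for `k'` and `p'`, then the
constant terms of `p` and `p'` coincide (this common value is the periodic constant). -/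
theorem periodic_constant_well_defined (F : PowerSeries ℚ) (k k' : ℕ) (hk : 0 < k)
    (hk' : 0 < k') (p p' : Polynomial ℚ) (N N' : ℕ)
    (hp : ∀ n ≥ N, (∑ i ∈ Finset.range (k * n), PowerSeries.coeff i F) = p.eval (n : ℚ))
    (hp' : ∀ n ≥ N', (∑ i ∈ Finset.range (k' * n), PowerSeries.coeff i F) = p'.eval (n : ℚ)) :
    p.coeff 0 = p'.coeff 0 := by
  set q : Polynomial ℚ := p.comp (Polynomial.C (k' : ℚ) * Polynomial.X) with hqdef
  set q' : Polynomial ℚ := p'.comp (Polynomial.C (k : ℚ) * Polynomial.X) with hq'def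
  have key : ∀ n : ℕ, max N N' ≤ n → q.eval (n : ℚ) = q'.eval (n : ℚ) := by
    intro n hn
    have hN : N ≤ k' * n := le_trans (le_trans (le_max_left _ _) hn) (Nat.le_mul_of_pos_left n hk')
    have hN' : N' ≤ k * n := le_trans (le_trans (le_max_right _ _) hn) (Nat.le_mul_of_pos_left n hk)
    have h1 := hp (k' * n) hN
    have h2 := hp' (k * n) hN'
    have hmul : k * (k' * n) = k' * (k * n) := by ring
    rw [hmul] at h1
    rw [hqdef, hq'def]
    simp only [Polynomial.eval_comp, Polynomial.eval_mul, Polynomial.eval_C, Polynomial.eval_X]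
    have h3 := h1.symm.trans h2
    push_cast at h3
    exact h3
  have hqq : q = q' := by
    have hroot : {x : ℚ | (q - q').IsRoot x}.Infinite := by
      apply Set.Infinite.mono (s := (fun n : ℕ => (n : ℚ)) '' Set.Ici (max N N'))
      · rintro x ⟨n, hn, rfl⟩
        simp [Polynomial.IsRoot, key n hn]
      · exact (Set.Ici_infinite _).image (fun a _ b _ h => Nat.cast_injective h)
    have := Polynomial.eq_zero_of_infinite_isRoot _ hroot
    linear_combination (norm := ring_nf) this
  have e1 : p.coeff 0 = q.eval 0 := by
    rw [hqdef]
    simp [Polynomial.eval_comp, Polynomial.coeff_zero_eq_eval_zero]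
  have e2 : p'.coeff 0 = q'.eval 0 := by
    rw [hq'def]
    simp [Polynomial.eval_comp, Polynomial.coeff_zero_eq_eval_zero]
  rw [e1, e2, hqq]
end

section
/- Let a and b be coprime positive integers. Then the periodic constant of the power series 1/((1-t^a)(1-t^b)) is 0. -/
/-- The partial sum `P_F(n)` of the first `n` coefficients of a formal power series. -/
noncomputable def partialSum (F : PowerSeries ℚ) (n : ℕ) : ℚ :=
  ∑ i ∈ Finset.range n, PowerSeries.coeff i F

/-- `F` admits `c` as its periodic constant. -/
def HasPeriodicConstant (F : PowerSeries ℚ) (c : ℚ) : Prop :=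
  ∃ k : ℕ, 0 < k ∧ ∃ p : Polynomial ℚ, p.coeff 0 = c ∧
    ∃ N : ℕ, ∀ n ≥ N, partialSum F (k * n) = p.eval (n : ℚ)

open Finset PowerSeries

/-- The geometric series `1/(1-X^a)`. -/
noncomputable def geomInd (a : ℕ) : PowerSeries ℚ :=
  PowerSeries.mk fun i => if a ∣ i then 1 else 0

lemma geomInd_mul (a : ℕ) (ha : 0 < a) :
    (1 - X ^ a : PowerSeries ℚ) * geomInd a = 1 := by
  ext n
  rw [sub_mul, one_mul, map_sub, coeff_X_pow_mul', PowerSeries.coeff_one]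
  simp only [geomInd, coeff_mk]
  rcases Nat.eq_zero_or_pos n with rfl | hn
  · rw [if_pos (dvd_zero a), if_neg (by omega), if_pos rfl, sub_zero]
  · rw [if_neg hn.ne']
    by_cases hd : a ∣ n
    · have hle : a ≤ n := Nat.le_of_dvd hn hd
      rw [if_pos hd, if_pos hle, if_pos (Nat.dvd_sub hd dvd_rfl), sub_self]
    · rw [if_neg hd]
      split_ifs with hle hd2
      · exact absurd ((Nat.sub_add_cancel hle) ▸ Dvd.dvd.add hd2 dvd_rfl) hd
      · simp
      · simp

lemma inv_eq_geom (a b : ℕ) (ha : 0 < a) (hb : 0 < b) :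
    (((1 - X ^ a) * (1 - X ^ b) : PowerSeries ℚ))⁻¹ = geomInd a * geomInd b := by
  rw [PowerSeries.inv_eq_iff_mul_eq_one]
  · have h1 := geomInd_mul a ha
    have h2 := geomInd_mul b hb
    calc geomInd a * geomInd b * ((1 - X ^ a) * (1 - X ^ b))
        = ((1 - X ^ a) * geomInd a) * ((1 - X ^ b) * geomInd b) := by ring
      _ = 1 := by rw [h1, h2, one_mul]
  · simp [ha.ne', hb.ne']

/-- for coprime positive integers `a, b`, the periodic constant of
`1/((1-t^a)(1-t^b))` is `0`. -/
theorem periodic_constant_geom_two (a b : ℕ) (ha : 0 < a) (hb : 0 < b)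
    (hab : Nat.Coprime a b) :
    HasPeriodicConstant (((1 - X ^ a) * (1 - X ^ b) : PowerSeries ℚ)⁻¹) 0 := by
  haveI : NeZero a := ⟨ha.ne'⟩
  -- coefficient description
  have hcoeff : ∀ i : ℕ, PowerSeries.coeff i (((1 - X ^ a) * (1 - X ^ b) : PowerSeries ℚ)⁻¹)
      = (((range (i+1) ×ˢ range (i+1)).filter (fun p => a * p.1 + b * p.2 = i)).card : ℚ) := by
    intro i
    rw [inv_eq_geom a b ha hb, PowerSeries.coeff_mul]
    simp only [geomInd, coeff_mk]
    have : ∀ p ∈ Finset.HasAntidiagonal.antidiagonal i,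
        (if a ∣ p.1 then (1:ℚ) else 0) * (if b ∣ p.2 then (1:ℚ) else 0)
        = if a ∣ p.1 ∧ b ∣ p.2 then (1:ℚ) else 0 := by
      intro p _; split_ifs with h1 h2 h3 <;> simp_all
    rw [Finset.sum_congr rfl this, Finset.sum_boole]
    congr 1
    apply Finset.card_bij (fun p _ => (p.1 / a, p.2 / b))
    · rintro ⟨u, v⟩ hm
      simp only [Finset.mem_filter, Finset.HasAntidiagonal.mem_antidiagonal] at hm
      obtain ⟨huv, hau, hbv⟩ := hm
      simp only [Finset.mem_filter, Finset.mem_product, Finset.mem_range]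
      refine ⟨⟨?_, ?_⟩, ?_⟩
      · exact Nat.lt_succ_of_le (le_trans (Nat.div_le_self _ _) (huv ▸ Nat.le_add_right _ _))
      · exact Nat.lt_succ_of_le (le_trans (Nat.div_le_self _ _) (huv ▸ Nat.le_add_left _ _))
      · rw [Nat.mul_div_cancel' hau, Nat.mul_div_cancel' hbv, huv]
    · rintro ⟨u₁, v₁⟩ h₁ ⟨u₂, v₂⟩ h₂ heq
      simp only [Finset.mem_filter, Finset.mem_antidiagonal] at h₁ h₂
      simp only [Prod.mk.injEq, Prod.ext_iff] at heq ⊢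
      obtain ⟨he1, he2⟩ := heq
      constructor
      · rw [← Nat.mul_div_cancel' h₁.2.1, ← Nat.mul_div_cancel' h₂.2.1, he1]
      · rw [← Nat.mul_div_cancel' h₁.2.2, ← Nat.mul_div_cancel' h₂.2.2, he2]
    · rintro ⟨j, k⟩ hm
      simp only [Finset.mem_filter, Finset.mem_product, Finset.mem_range] at hm
      refine ⟨(a * j, b * k), ?_, ?_⟩
      · simp only [Finset.mem_filter, Finset.HasAntidiagonal.mem_antidiagonal]
        exact ⟨hm.2, Dvd.intro j rfl, Dvd.intro k rfl⟩
      · simp [Nat.mul_div_cancel_left _ ha, Nat.mul_div_cancel_left _ hb]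
  -- partial sum as a cardinality
  have hps : ∀ N : ℕ, partialSum (((1 - X ^ a) * (1 - X ^ b) : PowerSeries ℚ)⁻¹) N
      = (((range N ×ˢ range N).filter (fun p => a * p.1 + b * p.2 < N)).card : ℚ) := by
    intro N
    unfold partialSum
    rw [Finset.sum_congr rfl (fun i _ => hcoeff i)]
    rw [← Nat.cast_sum]
    congr 1
    have hfib : ∀ x ∈ (range N ×ˢ range N).filter (fun p => a * p.1 + b * p.2 < N),
        a * x.1 + b * x.2 ∈ range N := by
      rintro ⟨j, k⟩ hm
      simp only [Finset.mem_filter] at hm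
      simpa using hm.2
    rw [Finset.card_eq_sum_card_fiberwise hfib]
    apply Finset.sum_congr rfl
    intro i hi
    simp only [Finset.mem_range] at hi
    congr 1
    ext ⟨j, k⟩
    simp only [Finset.mem_filter, Finset.mem_product, Finset.mem_range]
    have hja : j ≤ a * j := Nat.le_mul_of_pos_left j ha
    have hkb : k ≤ b * k := Nat.le_mul_of_pos_left k hb
    omega
  -- restrict the box
  have hbox : ∀ n : ℕ, ((range (a*b*n) ×ˢ range (a*b*n)).filter
        (fun p => a * p.1 + b * p.2 < a*b*n)).card
      = ((range (b*n) ×ˢ range (a*n)).filter (fun p => a * p.1 + b * p.2 < a*b*n)).card := by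
    intro n
    congr 1
    ext ⟨j, k⟩
    simp only [Finset.mem_filter, Finset.mem_product, Finset.mem_range]
    have e1 : a * (b * n) = a*b*n := by ring
    have e2 : b * (a * n) = a*b*n := by ring
    have hja : j ≤ a * j := Nat.le_mul_of_pos_left j ha
    have hkb : k ≤ b * k := Nat.le_mul_of_pos_left k hb
    have m1 : a * j < a * (b * n) → j < b * n := fun h => Nat.lt_of_mul_lt_mul_left h
    have m2 : b * k < b * (a * n) → k < a * n := fun h => Nat.lt_of_mul_lt_mul_left h
    have m3 : b * n ≤ a * (b * n) := Nat.le_mul_of_pos_left _ ha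
    have m4 : a * n ≤ b * (a * n) := Nat.le_mul_of_pos_left _ hb
    omega
  -- inner count
  have hinner : ∀ n : ℕ, ∀ k < a * n,
      ((range (b*n)).filter (fun j => a * j + b * k < a*b*n)).card = b*n - (b*k)/a := by
    intro n k hk
    obtain ⟨q, r, hr, hq, hdiv⟩ : ∃ q r, r < a ∧ a*q + r = b*k ∧ (b*k)/a = q :=
      ⟨(b*k)/a, (b*k) % a, Nat.mod_lt _ ha, Nat.div_add_mod _ _, rfl⟩
    rw [hdiv]
    have hiff : ∀ j, (a * j + b * k < a*b*n) ↔ j < b*n - q := by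
      intro j
      have e1 : a * (b * n) = a*b*n := by ring
      have hm : a * (j + q) = a*j + a*q := by ring
      constructor
      · intro h
        have h3 : a * (j + q) < a * (b*n) := by omega
        have := Nat.lt_of_mul_lt_mul_left h3
        omega
      · intro h
        have h2 : j + q + 1 ≤ b * n := by omega
        have h3 : a * (j + q + 1) ≤ a * (b*n) := Nat.mul_le_mul_left a h2
        have hm2 : a * (j + q + 1) = a*j + a*q + a := by ring
        omega
    have : (range (b*n)).filter (fun j => a * j + b * k < a*b*n)
        = range (b*n - q) := by
      ext j
      simp only [Finset.mem_filter, Finset.mem_range, hiff]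
      omega
    rw [this, Finset.card_range]
  -- sum of residues over a full period block
  have hperm : ∑ r ∈ range a, (b * r) % a = ∑ r ∈ range a, r := by
    have hinj : Set.InjOn (fun r => (b * r) % a) (range a) := by
      intro r₁ h₁ r₂ h₂ heq
      simp only [Finset.coe_range, Set.mem_Iio] at h₁ h₂
      have e1 : ((b * r₁ : ℕ) : ZMod a) = ((b * r₂ : ℕ) : ZMod a) := by
        rw [← ZMod.natCast_mod (b*r₁) a, ← ZMod.natCast_mod (b*r₂) a]
        exact congrArg (Nat.cast : ℕ → ZMod a) heq
      push_cast at e1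
      have hu : IsUnit (b : ZMod a) := (ZMod.isUnit_iff_coprime b a).mpr hab.symm
      have e2 : (r₁ : ZMod a) = (r₂ : ZMod a) := by
        rcases hu with ⟨u, hu⟩
        have := congrArg (fun x => (↑u⁻¹ : ZMod a) * x) e1
        simp only [← hu, ← mul_assoc, Units.inv_mul, one_mul] at this
        exact this
      have := congrArg ZMod.val e2
      rwa [ZMod.val_cast_of_lt h₁, ZMod.val_cast_of_lt h₂] at this
    have himg : (range a).image (fun r => (b * r) % a) = range a := by
      apply Finset.eq_of_subset_of_card_le
      · intro x hx
        simp only [Finset.mem_image, Finset.mem_range] at hx ⊢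
        obtain ⟨r, _, hr⟩ := hx
        exact hr ▸ Nat.mod_lt _ ha
      · rw [Finset.card_image_of_injOn hinj]
    calc ∑ r ∈ range a, (b * r) % a
        = ∑ x ∈ (range a).image (fun r => (b * r) % a), x := (Finset.sum_image (f := fun x => x)
          (fun x hx y hy h => hinj (Finset.mem_coe.mpr hx) (Finset.mem_coe.mpr hy) h)).symm
      _ = ∑ r ∈ range a, r := by rw [himg]
  have hmodsum : ∀ n : ℕ, ∑ k ∈ range (a*n), (b * k) % a = n * ∑ r ∈ range a, r := by
    intro n
    induction n with
    | zero => simp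
    | succ m ih =>
      have : a * (m + 1) = a * m + a := by ring
      rw [this, Finset.sum_range_add, ih]
      have : ∑ i ∈ range a, (b * (a * m + i)) % a = ∑ r ∈ range a, (b * r) % a := by
        apply Finset.sum_congr rfl
        intro i _
        have : b * (a * m + i) = a * (b * m) + b * i := by ring
        rw [this, Nat.mul_add_mod]
      rw [this, hperm]
      ring
  -- assemble
  refine ⟨a * b, Nat.mul_pos ha hb,
    Polynomial.C ((a*b : ℚ)/2) * Polynomial.X^2 + Polynomial.C (((a:ℚ)+b-1)/2) * Polynomial.X,
    by simp, 1, ?_⟩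
  intro n hn
  rw [hps (a*b*n), hbox n]
  -- card as sum
  have hcard : ((range (b*n) ×ˢ range (a*n)).filter (fun p => a * p.1 + b * p.2 < a*b*n)).card
      = ∑ k ∈ range (a*n), (b*n - (b*k)/a) := by
    rw [Finset.card_filter]
    rw [Finset.sum_product_right]
    apply Finset.sum_congr rfl
    intro k hk
    simp only [Finset.mem_range] at hk
    rw [← Finset.card_filter]
    exact hinner n k hk
  rw [hcard]
  have hqle : ∀ k ∈ range (a*n), (b*k)/a ≤ b*n := by
    intro k hk
    simp only [Finset.mem_range] at hk
    have : b * k < b * n * a := by nlinarith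
    exact le_of_lt ((Nat.div_lt_iff_lt_mul ha).mpr this)
  -- cast the sum to ℚ
  rw [Nat.cast_sum]
  have hterm : ∀ k ∈ range (a*n), ((b*n - (b*k)/a : ℕ) : ℚ)
      = (b:ℚ)*n - ((b:ℚ)*k - (((b*k) % a : ℕ) : ℚ))/a := by
    intro k hk
    rw [Nat.cast_sub (hqle k hk)]
    have hq : a * ((b*k)/a) + (b*k) % a = b*k := Nat.div_add_mod _ _
    have hqc : (a:ℚ) * (((b*k)/a : ℕ):ℚ) + (((b*k) % a : ℕ):ℚ) = (b:ℚ)*k := by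
      exact_mod_cast congrArg (Nat.cast : ℕ → ℚ) hq
    have ha' : (a:ℚ) ≠ 0 := Nat.cast_ne_zero.mpr ha.ne'
    push_cast
    field_simp
    linarith
  rw [Finset.sum_congr rfl hterm]
  rw [Finset.sum_sub_distrib]
  rw [Finset.sum_const, Finset.card_range]
  have hS1 : ∑ k ∈ range (a*n), ((b:ℚ)*k - (((b*k) % a : ℕ) : ℚ))/a
      = ((b:ℚ) * ((a*n:ℚ) * ((a*n:ℚ) - 1) / 2) - (n:ℚ) * ((a:ℚ) * ((a:ℚ)-1) / 2)) / a := by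
    have hg1 : ∑ k ∈ range (a*n), ((k:ℕ):ℚ) = (a*n:ℚ) * ((a*n:ℚ) - 1) / 2 := by
      have := Finset.sum_range_id_mul_two (a*n)
      have hcast : ((∑ i ∈ range (a*n), i : ℕ) : ℚ) * 2 = ((a*n : ℕ):ℚ) * ((a*n - 1 : ℕ):ℚ) := by
        exact_mod_cast congrArg (Nat.cast : ℕ → ℚ) this
      have han : 1 ≤ a * n := by
        have := Nat.mul_le_mul ha hn
        omega
      rw [Nat.cast_sub han] at hcast
      push_cast at hcast ⊢
      linarith
    have hg2 : ∑ k ∈ range (a*n), (((b*k) % a : ℕ) : ℚ) = (n:ℚ) * ((a:ℚ) * ((a:ℚ)-1) / 2) := by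
      have := hmodsum n
      have hgauss := Finset.sum_range_id_mul_two a
      have hcast : ((∑ k ∈ range (a*n), (b*k) % a : ℕ) : ℚ)
          = (n:ℚ) * ((∑ r ∈ range a, r : ℕ):ℚ) := by exact_mod_cast congrArg (Nat.cast : ℕ → ℚ) this
      have hcast2 : ((∑ r ∈ range a, r : ℕ):ℚ) * 2 = (a:ℚ) * (((a:ℕ) - 1 : ℕ):ℚ) := by
        exact_mod_cast congrArg (Nat.cast : ℕ → ℚ) hgauss
      rw [Nat.cast_sub ha] at hcast2
      rw [Nat.cast_sum] at hcast
      push_cast at hcast hcast2 ⊢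
      have hS : (∑ x ∈ range a, (x:ℚ)) = (a:ℚ) * ((a:ℚ)-1) / 2 := by linarith
      rw [hcast, hS]
    rw [← Finset.sum_div]
    rw [Finset.sum_sub_distrib]
    congr 1
    rw [← Finset.mul_sum, hg1, hg2]
  rw [hS1]
  have ha' : (a:ℚ) ≠ 0 := Nat.cast_ne_zero.mpr ha.ne'
  simp only [Polynomial.eval_add, Polynomial.eval_mul, Polynomial.eval_C, Polynomial.eval_pow,
    Polynomial.eval_X]

  field_simp
  rw [nsmul_eq_mul]
  push_cast
  ring
end

section
/- Let a_1, ..., a_r be pairwise coprime integers all \ge 2 (r \ge 2), a = \prod_i a_i, p_i = a/a_i. Then the rational function Q_1(t) = (1-t^a)^{r-1}/\prod_{i=1}^r (1-t^{p_i}) - 1/(1-t) is a polynomial in t. -/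
open PowerSeries
open scoped Polynomial

private lemma aux_dvd_of_dvd (m n : ℕ) (h : m ∣ n) :
    ((Polynomial.X:ℚ[X])^m - 1) ∣ (Polynomial.X:ℚ[X])^n - 1 := by
  obtain ⟨k, rfl⟩ := h
  exact pow_one_sub_dvd_pow_mul_sub_one Polynomial.X m k

private lemma aux_gcd (m n : ℕ) :
    EuclideanDomain.gcd ((Polynomial.X:ℚ[X])^m - 1) ((Polynomial.X:ℚ[X])^n - 1) ∣
      (Polynomial.X:ℚ[X])^(Nat.gcd m n) - 1 := by
  induction m using Nat.strong_induction_on generalizing n with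
  | _ m ih =>
    rcases Nat.eq_zero_or_pos m with hm | hm
    · subst hm
      simp only [pow_zero, sub_self, EuclideanDomain.gcd_zero_left, Nat.gcd_zero_left]
      exact dvd_rfl
    · set d := EuclideanDomain.gcd ((Polynomial.X:ℚ[X])^m - 1) ((Polynomial.X:ℚ[X])^n - 1) with hd
      have h1 : d ∣ (Polynomial.X:ℚ[X])^m - 1 := EuclideanDomain.gcd_dvd_left _ _
      have h2 : d ∣ (Polynomial.X:ℚ[X])^n - 1 := EuclideanDomain.gcd_dvd_right _ _
      have h3 : d ∣ (Polynomial.X:ℚ[X])^(m * (n / m)) - 1 :=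
        h1.trans (aux_dvd_of_dvd _ _ ⟨n / m, rfl⟩)
      have h4 : d ∣ (Polynomial.X:ℚ[X])^(n % m) - 1 := by
        have hmod : m * (n / m) + n % m = n := Nat.div_add_mod n m
        have hx : (Polynomial.X:ℚ[X])^n = Polynomial.X^(m*(n/m)) * Polynomial.X^(n%m) := by
          rw [← pow_add, hmod]
        have hn : (Polynomial.X:ℚ[X])^(n % m) - 1 =
            ((Polynomial.X:ℚ[X])^n - 1) -
              Polynomial.X^(n % m) * ((Polynomial.X:ℚ[X])^(m * (n/m)) - 1) := by
          rw [hx]; ring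
        rw [hn]
        exact dvd_sub h2 (Dvd.dvd.mul_left h3 _)
      have h6 : d ∣ EuclideanDomain.gcd ((Polynomial.X:ℚ[X])^(n % m) - 1)
          ((Polynomial.X:ℚ[X])^m - 1) :=
        EuclideanDomain.dvd_gcd h4 h1
      have h7 := ih (n % m) (Nat.mod_lt n hm) m
      rw [Nat.gcd_rec m n]
      exact h6.trans h7

private lemma aux_pair (m n : ℕ) :
    ((Polynomial.X:ℚ[X])^m - 1) * ((Polynomial.X:ℚ[X])^n - 1) ∣
      ((Polynomial.X:ℚ[X])^(Nat.gcd m n) - 1) * ((Polynomial.X:ℚ[X])^(Nat.lcm m n) - 1) := by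
  have h := EuclideanDomain.gcd_mul_lcm ((Polynomial.X:ℚ[X])^m - 1) ((Polynomial.X:ℚ[X])^n - 1)
  rw [← h]
  exact mul_dvd_mul (aux_gcd m n)
    (EuclideanDomain.lcm_dvd (aux_dvd_of_dvd _ _ (Nat.dvd_lcm_left m n))
      (aux_dvd_of_dvd _ _ (Nat.dvd_lcm_right m n)))

private lemma aux_pair' (c u v : ℕ) (h : Nat.Coprime u v) :
    ((Polynomial.X:ℚ[X])^(c*u) - 1) * ((Polynomial.X:ℚ[X])^(c*v) - 1) ∣
      ((Polynomial.X:ℚ[X])^c - 1) * ((Polynomial.X:ℚ[X])^(c*u*v) - 1) := by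
  have hg : Nat.gcd (c*u) (c*v) = c := by rw [Nat.gcd_mul_left, h]; exact Nat.mul_one c
  have hl : Nat.lcm (c*u) (c*v) = c*u*v := by
    rw [Nat.lcm_mul_left, h.lcm_eq_mul, Nat.mul_assoc]
  have := aux_pair (c*u) (c*v)
  rwa [hg, hl] at this

private lemma aux_main (r : ℕ) (a : Fin r → ℕ)
    (hcop : ∀ i j, i ≠ j → Nat.Coprime (a i) (a j)) (s : Finset (Fin r)) :
    (∏ i ∈ s, ((Polynomial.X:ℚ[X])^(∏ j ∈ ({i}ᶜ : Finset (Fin r)), a j) - 1)) *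
        ((Polynomial.X:ℚ[X])^(∏ j, a j) - 1) ∣
      ((Polynomial.X:ℚ[X])^(∏ j ∈ sᶜ, a j) - 1) *
        ((Polynomial.X:ℚ[X])^(∏ j, a j) - 1)^(s.card) := by
  classical
  induction s using Finset.induction_on with
  | empty =>
      simp
  | insert i s hi ih =>
      set A := ∏ j, a j with hA
      set c := ∏ j ∈ ((insert i s)ᶜ : Finset (Fin r)), a j with hc
      set u := ∏ j ∈ s, a j with hu
      have hsub : s ⊆ ({i}ᶜ : Finset (Fin r)) := by
        intro x hx
        simp only [Finset.mem_compl, Finset.mem_singleton]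
        rintro rfl; exact hi hx
      have hset1 : ({i}ᶜ : Finset (Fin r)) \ s = (insert i s)ᶜ := by
        ext x
        simp only [Finset.mem_sdiff, Finset.mem_compl, Finset.mem_singleton, Finset.mem_insert]
        tauto
      have h1 : (∏ j ∈ ({i}ᶜ : Finset (Fin r)), a j) = c * u := by
        rw [← Finset.prod_sdiff hsub, hset1]
      have hset2 : (sᶜ : Finset (Fin r)).erase i = (insert i s)ᶜ := by
        ext x
        simp only [Finset.mem_erase, Finset.mem_compl, Finset.mem_insert]
        tauto
      have h2 : (∏ j ∈ (sᶜ : Finset (Fin r)), a j) = c * a i := by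
        rw [← Finset.mul_prod_erase sᶜ a (by simpa using hi), hset2, mul_comm]
      have h3 : c * u * a i = A := by
        rw [hA, ← Finset.prod_mul_prod_compl s a, h2, ← hu]; ring
      have hcuv : Nat.Coprime u (a i) :=
        Nat.Coprime.prod_left fun j hj => hcop j i (by rintro rfl; exact hi hj)
      have hcard : (insert i s).card = s.card + 1 := Finset.card_insert_of_notMem hi
      rw [Finset.prod_insert hi, hcard, h1]
      have start : ((Polynomial.X:ℚ[X])^(c*u) - 1) *
            ((∏ i ∈ s, ((Polynomial.X:ℚ[X])^(∏ j ∈ ({i}ᶜ : Finset (Fin r)), a j) - 1)) *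
              ((Polynomial.X:ℚ[X])^A - 1)) ∣
          ((Polynomial.X:ℚ[X])^(c*u) - 1) * (((Polynomial.X:ℚ[X])^(c * a i) - 1) *
            ((Polynomial.X:ℚ[X])^A - 1)^(s.card)) := by
        rw [← h2]; exact mul_dvd_mul_left _ ih
      have mid : ((Polynomial.X:ℚ[X])^(c*u) - 1) * (((Polynomial.X:ℚ[X])^(c * a i) - 1) *
            ((Polynomial.X:ℚ[X])^A - 1)^(s.card)) ∣
          (((Polynomial.X:ℚ[X])^c - 1) * ((Polynomial.X:ℚ[X])^A - 1)) *
            ((Polynomial.X:ℚ[X])^A - 1)^(s.card) := by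
        have h4 := mul_dvd_mul_right (aux_pair' c u (a i) hcuv) (((Polynomial.X:ℚ[X])^A - 1)^s.card)
        rw [h3] at h4
        rw [← mul_assoc]
        exact h4
      have hre : ((Polynomial.X:ℚ[X])^c - 1) * ((Polynomial.X:ℚ[X])^A - 1)^(s.card+1) =
          (((Polynomial.X:ℚ[X])^c - 1) * ((Polynomial.X:ℚ[X])^A - 1)) *
            ((Polynomial.X:ℚ[X])^A - 1)^(s.card) := by ring
      rw [hre, mul_assoc]
      exact start.trans mid

/-- for pairwise coprime integers `a₁, …, a_r ≥ 2` (`r ≥ 2`), with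
`a = ∏ aᵢ` and `pᵢ = a/aᵢ`, the formal power series
`Q₁(t) = (1-t^a)^{r-1}/∏ᵢ(1-t^{pᵢ}) - 1/(1-t)` is a polynomial. -/
theorem Q1_is_polynomial (r : ℕ) (hr : 2 ≤ r) (a : Fin r → ℕ) (ha : ∀ i, 2 ≤ a i)
    (hcop : ∀ i j, i ≠ j → Nat.Coprime (a i) (a j)) :
    ∃ q : Polynomial ℚ,
      (q : PowerSeries ℚ) =
        (1 - X ^ (∏ j, a j)) ^ (r - 1) *
          (∏ i, ((1 : PowerSeries ℚ) - X ^ ((∏ j, a j) / a i)))⁻¹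
        - ((1 : PowerSeries ℚ) - X)⁻¹ := by
  classical
  obtain ⟨k, rfl⟩ : ∃ k, r = k + 1 := ⟨r - 1, by omega⟩
  simp only [Nat.add_sub_cancel]
  set A := ∏ j, a j with hA
  have hapos : ∀ i, 0 < a i := fun i => lt_of_lt_of_le two_pos (ha i)
  have hApos : 0 < A := Finset.prod_pos fun i _ => hapos i
  have hppos : ∀ i : Fin (k+1), 0 < ∏ j ∈ ({i}ᶜ : Finset (Fin (k+1))), a j :=
    fun i => Finset.prod_pos fun j _ => hapos j
  have hcompl : ∀ i : Fin (k+1), ({i}ᶜ : Finset (Fin (k+1))) = Finset.univ.erase i := by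
    intro i; ext x
    simp [Finset.mem_compl, Finset.mem_singleton, Finset.mem_erase]
  have hApi : ∀ i : Fin (k+1), A = a i * ∏ j ∈ ({i}ᶜ : Finset (Fin (k+1))), a j := by
    intro i
    rw [hcompl i, hA, Finset.mul_prod_erase Finset.univ a (Finset.mem_univ i)]
  have hdiv : ∀ i : Fin (k+1), A / a i = ∏ j ∈ ({i}ᶜ : Finset (Fin (k+1))), a j := by
    intro i
    rw [hApi i, Nat.mul_div_cancel_left _ (hapos i)]
  -- divisibility
  have hdvd := aux_main (k+1) a hcop Finset.univ
  rw [Finset.compl_univ, Finset.prod_empty, pow_one, Finset.card_univ, Fintype.card_fin] at hdvd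
  obtain ⟨Δ, hΔ⟩ := hdvd
  set D' := ∏ i, ((Polynomial.X:ℚ[X])^(∏ j ∈ ({i}ᶜ : Finset (Fin (k+1))), a j) - 1) with hD'
  -- cancel X^A - 1
  have hXA0 : ((Polynomial.X:ℚ[X])^A - 1) ≠ 0 := by
    intro h
    have h0 : Polynomial.eval 0 ((Polynomial.X:ℚ[X])^A - 1) = -1 := by
      simp [zero_pow hApos.ne']
    rw [h] at h0
    simp at h0
  have hfact1 : ((Polynomial.X:ℚ[X]) - 1) * ((Polynomial.X:ℚ[X])^A - 1)^k = D' * Δ := by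
    apply mul_left_cancel₀ hXA0
    have e1 : ((Polynomial.X:ℚ[X])^A - 1) *
        (((Polynomial.X:ℚ[X]) - 1) * ((Polynomial.X:ℚ[X])^A - 1)^k) =
        ((Polynomial.X:ℚ[X]) - 1) * ((Polynomial.X:ℚ[X])^A - 1)^(k+1) := by
      ring
    rw [e1, hΔ]; ring
  -- evaluate Δ at 1
  have hX10 : ((Polynomial.X:ℚ[X]) - 1) ≠ 0 := by
    intro h
    have h0 : Polynomial.eval 0 ((Polynomial.X:ℚ[X]) - 1) = -1 := by simp
    rw [h] at h0
    simp at h0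
  have hprodgeom : D' = (∏ i, (∑ m ∈ Finset.range (∏ j ∈ ({i}ᶜ : Finset (Fin (k+1))), a j),
      (Polynomial.X:ℚ[X])^m)) * ((Polynomial.X:ℚ[X]) - 1)^(k+1) := by
    rw [hD']
    calc (∏ i, ((Polynomial.X:ℚ[X])^(∏ j ∈ ({i}ᶜ : Finset (Fin (k+1))), a j) - 1))
        = ∏ i, ((∑ m ∈ Finset.range (∏ j ∈ ({i}ᶜ : Finset (Fin (k+1))), a j),
            (Polynomial.X:ℚ[X])^m) * ((Polynomial.X:ℚ[X]) - 1)) :=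
          Finset.prod_congr rfl fun i _ => (geom_sum_mul _ _).symm
      _ = (∏ i, (∑ m ∈ Finset.range (∏ j ∈ ({i}ᶜ : Finset (Fin (k+1))), a j),
            (Polynomial.X:ℚ[X])^m)) * ∏ _i : Fin (k+1), ((Polynomial.X:ℚ[X]) - 1) :=
          Finset.prod_mul_distrib
      _ = _ := by rw [Finset.prod_const, Finset.card_univ, Fintype.card_fin]
  have hsig : (∑ m ∈ Finset.range A, (Polynomial.X:ℚ[X])^m)^k =
      (∏ i, (∑ m ∈ Finset.range (∏ j ∈ ({i}ᶜ : Finset (Fin (k+1))), a j),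
        (Polynomial.X:ℚ[X])^m)) * Δ := by
    apply mul_right_cancel₀ (pow_ne_zero (k+1) hX10)
    have e2 : ((Polynomial.X:ℚ[X]) - 1) * ((Polynomial.X:ℚ[X])^A - 1)^k =
        (∑ m ∈ Finset.range A, (Polynomial.X:ℚ[X])^m)^k * ((Polynomial.X:ℚ[X]) - 1)^(k+1) := by
      rw [← geom_sum_mul (Polynomial.X:ℚ[X]) A, mul_pow]
      ring
    calc (∑ m ∈ Finset.range A, (Polynomial.X:ℚ[X])^m)^k * ((Polynomial.X:ℚ[X]) - 1)^(k+1)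
        = ((Polynomial.X:ℚ[X]) - 1) * ((Polynomial.X:ℚ[X])^A - 1)^k := e2.symm
      _ = D' * Δ := hfact1
      _ = _ := by rw [hprodgeom]; ring
  have hevalgeom : ∀ n : ℕ, Polynomial.eval (1:ℚ) (∑ m ∈ Finset.range n, (Polynomial.X:ℚ[X])^m)
      = (n:ℚ) := by
    intro n
    simp [Polynomial.eval_finset_sum]
  have heval := congrArg (Polynomial.eval (1:ℚ)) hsig
  rw [Polynomial.eval_mul, Polynomial.eval_pow, Polynomial.eval_prod, hevalgeom] at heval
  have hpe : ∀ i ∈ (Finset.univ : Finset (Fin (k+1))),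
      Polynomial.eval (1:ℚ) (∑ m ∈ Finset.range (∏ j ∈ ({i}ᶜ : Finset (Fin (k+1))), a j),
        (Polynomial.X:ℚ[X])^m) = ((∏ j ∈ ({i}ᶜ : Finset (Fin (k+1))), a j : ℕ) : ℚ) :=
    fun i _ => hevalgeom _
  rw [Finset.prod_congr rfl hpe] at heval
  have hAne : (A:ℚ) ≠ 0 := Nat.cast_ne_zero.mpr hApos.ne'
  have hprodp : (∏ i, ((∏ j ∈ ({i}ᶜ : Finset (Fin (k+1))), a j : ℕ) : ℚ)) = (A:ℚ)^k := by
    have hn : (∏ i : Fin (k+1), (∏ j ∈ ({i}ᶜ : Finset (Fin (k+1))), a j)) * A = A^(k+1) := by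
      calc (∏ i : Fin (k+1), (∏ j ∈ ({i}ᶜ : Finset (Fin (k+1))), a j)) * A
          = ∏ i : Fin (k+1), ((∏ j ∈ ({i}ᶜ : Finset (Fin (k+1))), a j) * a i) := by
            rw [Finset.prod_mul_distrib, hA]
        _ = ∏ _i : Fin (k+1), A := Finset.prod_congr rfl fun i _ => by rw [mul_comm, ← hApi i]
        _ = A^(k+1) := by rw [Finset.prod_const, Finset.card_univ, Fintype.card_fin]
    have hq : ((∏ i : Fin (k+1), (∏ j ∈ ({i}ᶜ : Finset (Fin (k+1))), a j) : ℕ) : ℚ) * (A:ℚ)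
        = (A:ℚ)^k * (A:ℚ) := by
      rw [← Nat.cast_mul, hn]
      push_cast
      ring
    have := mul_right_cancel₀ hAne hq
    rw [← this]
    push_cast
    ring
  rw [hprodp] at heval
  have hAq : ((A:ℚ))^k ≠ 0 := pow_ne_zero _ hAne
  have hΔ1 : Polynomial.eval (1:ℚ) Δ = 1 := by
    have h' : (A:ℚ)^k * 1 = (A:ℚ)^k * Polynomial.eval 1 Δ := by rw [mul_one]; exact heval
    exact (mul_left_cancel₀ hAq h').symm
  -- Δ - 1 = (X - 1) * s
  have hrootdvd : ((Polynomial.X:ℚ[X]) - Polynomial.C 1) ∣ (Δ - 1) := by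
    rw [Polynomial.dvd_iff_isRoot]
    simp [Polynomial.IsRoot, hΔ1]
  obtain ⟨s, hs⟩ := hrootdvd
  have hs' : Δ - 1 = ((Polynomial.X:ℚ[X]) - 1) * s := by
    rw [hs]; simp
  -- sign conversions
  have hDp : (∏ i, ((1:ℚ[X]) - Polynomial.X^(∏ j ∈ ({i}ᶜ : Finset (Fin (k+1))), a j)))
      = -((-1:ℚ[X])^k) * D' := by
    rw [hD']
    calc (∏ i, ((1:ℚ[X]) - Polynomial.X^(∏ j ∈ ({i}ᶜ : Finset (Fin (k+1))), a j)))
        = ∏ i, ((-1) * ((Polynomial.X:ℚ[X])^(∏ j ∈ ({i}ᶜ : Finset (Fin (k+1))), a j) - 1)) :=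
          Finset.prod_congr rfl fun i _ => by ring
      _ = (∏ _i : Fin (k+1), (-1:ℚ[X])) *
            ∏ i, ((Polynomial.X:ℚ[X])^(∏ j ∈ ({i}ᶜ : Finset (Fin (k+1))), a j) - 1) :=
          Finset.prod_mul_distrib
      _ = _ := by
          rw [Finset.prod_const, Finset.card_univ, Fintype.card_fin]
          ring
  have hAp : ((1:ℚ[X]) - Polynomial.X^A)^k =
      (-1:ℚ[X])^k * ((Polynomial.X:ℚ[X])^A - 1)^k := by
    have hb : (1:ℚ[X]) - Polynomial.X^A = -((Polynomial.X:ℚ[X])^A - 1) := by ring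
    rw [hb, neg_pow]
  -- key polynomial identity
  have hkey : (-s) * ((∏ i, ((1:ℚ[X]) - Polynomial.X^(∏ j ∈ ({i}ᶜ : Finset (Fin (k+1))), a j))) *
        ((1:ℚ[X]) - Polynomial.X)) =
      ((1:ℚ[X]) - Polynomial.X^A)^k * ((1:ℚ[X]) - Polynomial.X) -
        ∏ i, ((1:ℚ[X]) - Polynomial.X^(∏ j ∈ ({i}ᶜ : Finset (Fin (k+1))), a j)) := by
    rw [hDp, hAp]
    linear_combination ((-1:ℚ[X])^k) * hfact1 + ((-1:ℚ[X])^k * D') * hs'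
  -- move to power series
  refine ⟨-s, ?_⟩
  have hBeq : (∏ i, ((1 : PowerSeries ℚ) - X ^ (A / a i))) =
      ∏ i, ((1 : PowerSeries ℚ) - X ^ (∏ j ∈ ({i}ᶜ : Finset (Fin (k+1))), a j)) :=
    Finset.prod_congr rfl fun i _ => by rw [hdiv i]
  rw [hBeq]
  set B := ∏ i, ((1 : PowerSeries ℚ) - X ^ (∏ j ∈ ({i}ᶜ : Finset (Fin (k+1))), a j)) with hB
  set C := (1 : PowerSeries ℚ) - X with hC
  set Aps := ((1 : PowerSeries ℚ) - X ^ A)^k with hAps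
  have hcB : constantCoeff (R := ℚ) B = 1 := by
    rw [hB, map_prod]
    apply Finset.prod_eq_one
    intro i _
    simp [zero_pow (hppos i).ne']
  have hcC : constantCoeff (R := ℚ) C = 1 := by simp [hC]
  have hB1 : B * B⁻¹ = 1 := PowerSeries.mul_inv_cancel _ (by rw [hcB]; exact one_ne_zero)
  have hC1 : C * C⁻¹ = 1 := PowerSeries.mul_inv_cancel _ (by rw [hcC]; exact one_ne_zero)
  have hBC : B * C ≠ 0 := by
    intro h
    have h2 := congrArg (constantCoeff (R := ℚ)) h
    rw [map_mul, hcB, hcC] at h2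
    simp at h2
  -- coerce hkey
  have cfac : ∀ n : ℕ, (((1:ℚ[X]) - Polynomial.X^n : ℚ[X]) : PowerSeries ℚ)
      = (1 : PowerSeries ℚ) - X^n := by
    intro n
    rw [Polynomial.coe_sub, Polynomial.coe_one, Polynomial.coe_pow, Polynomial.coe_X]
  have cprod : ((∏ i, ((1:ℚ[X]) - Polynomial.X^(∏ j ∈ ({i}ᶜ : Finset (Fin (k+1))), a j)) : ℚ[X]) :
      PowerSeries ℚ) = B := by
    rw [hB, ← Polynomial.coeToPowerSeries.ringHom_apply, map_prod]
    exact Finset.prod_congr rfl fun i _ => by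
      rw [Polynomial.coeToPowerSeries.ringHom_apply, cfac]
  have hkey_ps : ((-s : ℚ[X]) : PowerSeries ℚ) * (B * C) = Aps * C - B := by
    have h3 := congrArg (fun p : ℚ[X] => (p : PowerSeries ℚ)) hkey
    simp only [Polynomial.coe_mul, Polynomial.coe_sub, Polynomial.coe_pow, Polynomial.coe_one,
      Polynomial.coe_X, cprod, cfac] at h3
    rw [← hC, ← hAps] at h3
    exact h3
  refine mul_right_cancel₀ hBC ?_
  rw [hkey_ps]
  have hexp : (Aps * B⁻¹ - C⁻¹) * (B * C) = Aps * C * (B * B⁻¹) - B * (C * C⁻¹) := by ring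
  rw [hexp, hB1, hC1, mul_one, mul_one]
end
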